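/- For any matrix X ∈ ℝ^{n×m}, the nuclear norm equals the minimum of (1/2)·Tr(Z) over all positive semidefinite matrices Z ∈ ℝ^{(n+m)×(n+m)} whose upper-right n×m block equals X. -/

import Mathlib

/-!
Write `X = U Σ Vᴴ` with `V` orthogonal, `Σ = diag σ` the singular values and `U` a partial
isometry (`U Uᴴ U = U`, so `U Uᴴ ≤ 1`). The block matrix `[U; V] Σ [U; V]ᴴ` is positive
semidefinite, has `X` as its upper-right block and trace `2 ∑ σ`. Conversely, if
`Z = [[A, X], [Xᴴ, B]] ⪰ 0`, testing `Z` against `[U; -V]` gives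
`2 tr (Uᴴ X V) ≤ tr (Uᴴ A U) + tr (Vᴴ B V) ≤ tr A + tr B`, and `tr (Uᴴ X V) = ∑ σ`.
-/

noncomputable def nuclearNorm {n m : ℕ} (X : Matrix (Fin n) (Fin m) ℝ) : ℝ :=
  ∑ i, Real.sqrt ((Matrix.isHermitian_conjTranspose_mul_self X).eigenvalues i)

noncomputable def frob {n m : ℕ} (X : Matrix (Fin n) (Fin m) ℝ) : ℝ :=
  Real.sqrt (∑ i, ∑ j, (X i j)^2)

open Matrix

namespace Matrix

variable {ι κ ν : Type*} [Fintype ι] [Fintype κ] [Fintype ν]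

lemma trace_eq_trace_toBlocks₁₁_add_trace_toBlocks₂₂ {R : Type*} [AddCommMonoid R]
    (Z : Matrix (ι ⊕ κ) (ι ⊕ κ) R) : Z.trace = Z.toBlocks₁₁.trace + Z.toBlocks₂₂.trace := by
  simp [trace, Fintype.sum_sum_type, toBlocks₁₁, toBlocks₂₂]

lemma PosSemidef.trace_conjTranspose_mul_mul_le [DecidableEq ι] {A : Matrix ι ι ℝ}
    (hA : A.PosSemidef) {U : Matrix ι κ ℝ} (hU : U * Uᴴ * U = U) :
    (Uᴴ * A * U).trace ≤ A.trace := by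
  set P : Matrix ι ι ℝ := 1 - U * Uᴴ
  have hPH : Pᴴ = P := by simp [P]
  have hPP : P * P = P := by
    simp only [P, sub_mul, mul_sub, one_mul, mul_one, ← Matrix.mul_assoc, hU, sub_self, sub_zero]
  have key : (Pᴴ * A * P).trace = A.trace - (Uᴴ * A * U).trace := calc
    (Pᴴ * A * P).trace = (A * (P * P)).trace := by
      rw [hPH, Matrix.mul_assoc, trace_mul_comm, Matrix.mul_assoc]
    _ = A.trace - (Uᴴ * A * U).trace := by
      rw [hPP, Matrix.mul_sub, Matrix.mul_one, trace_sub, Matrix.mul_assoc, trace_mul_comm,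
        ← Matrix.mul_assoc, Matrix.mul_assoc, trace_mul_comm]
  linarith [(hA.conjTranspose_mul_mul_same P).trace_nonneg]

lemma PosSemidef.two_mul_trace_toBlocks₁₂_le {Z : Matrix (ι ⊕ κ) (ι ⊕ κ) ℝ}
    (hZ : Z.PosSemidef) (P : Matrix ι ν ℝ) (Q : Matrix κ ν ℝ) :
    2 * (Pᴴ * Z.toBlocks₁₂ * Q).trace ≤
      (Pᴴ * Z.toBlocks₁₁ * P).trace + (Qᴴ * Z.toBlocks₂₂ * Q).trace := by
  have h₂₁ : Z.toBlocks₂₁ = Z.toBlocks₁₂ᴴ := by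
    rw [← fromBlocks_toBlocks Z] at hZ
    exact ((isHermitian_fromBlocks_iff.mp hZ.isHermitian).2.1).symm
  have hQP : (Qᴴ * (Z.toBlocks₂₁ * P)).trace = (Pᴴ * (Z.toBlocks₁₂ * Q)).trace := by
    simpa [h₂₁, Matrix.mul_assoc] using trace_conjTranspose (Pᴴ * (Z.toBlocks₁₂ * Q))
  have hT := (hZ.conjTranspose_mul_mul_same (fromRows P (-Q))).trace_nonneg
  rw [← fromBlocks_toBlocks Z, Matrix.mul_assoc, fromBlocks_mul_fromRows,
    conjTranspose_fromRows_eq_fromCols_conjTranspose, fromCols_mul_fromRows] at hT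
  simp only [Matrix.mul_neg, Matrix.conjTranspose_neg, Matrix.neg_mul, Matrix.mul_add,
    trace_add, trace_neg, hQP] at hT
  simp only [Matrix.mul_assoc]
  linarith

lemma PosSemidef.two_mul_sum_le_trace [DecidableEq ι] [DecidableEq κ] [DecidableEq ν]
    {Z : Matrix (ι ⊕ κ) (ι ⊕ κ) ℝ} (hZ : Z.PosSemidef) {U : Matrix ι ν ℝ} {V : Matrix κ ν ℝ}
    {σ : ν → ℝ} (hU : U * Uᴴ * U = U) (hV : V * Vᴴ * V = V)
    (hUZV : Uᴴ * Z.toBlocks₁₂ * V = diagonal σ) :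
    2 * ∑ i, σ i ≤ Z.trace := calc
  2 * ∑ i, σ i = 2 * (Uᴴ * Z.toBlocks₁₂ * V).trace := by rw [hUZV, trace_diagonal]
  _ ≤ (Uᴴ * Z.toBlocks₁₁ * U).trace + (Vᴴ * Z.toBlocks₂₂ * V).trace :=
    hZ.two_mul_trace_toBlocks₁₂_le U V
  _ ≤ Z.toBlocks₁₁.trace + Z.toBlocks₂₂.trace :=
    add_le_add ((hZ.submatrix Sum.inl).trace_conjTranspose_mul_mul_le hU)
      ((hZ.submatrix Sum.inr).trace_conjTranspose_mul_mul_le hV)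
  _ = Z.trace := (trace_eq_trace_toBlocks₁₁_add_trace_toBlocks₂₂ Z).symm

lemma exists_posSemidef_toBlocks₁₂_eq [DecidableEq ν] (U : Matrix ι ν ℝ) (V : Matrix κ ν ℝ)
    {σ : ν → ℝ} (hσ : 0 ≤ σ) :
    ∃ Z : Matrix (ι ⊕ κ) (ι ⊕ κ) ℝ, Z.PosSemidef ∧ Z.toBlocks₁₂ = U * diagonal σ * Vᴴ ∧
      Z.trace = (Uᴴ * U * diagonal σ).trace + (Vᴴ * V * diagonal σ).trace := by
  refine ⟨fromRows U V * diagonal σ * (fromRows U V)ᴴ,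
    (posSemidef_diagonal_iff.mpr hσ).mul_mul_conjTranspose_same _, ?_, ?_⟩
  · rw [fromRows_mul, conjTranspose_fromRows_eq_fromCols_conjTranspose, fromRows_mul_fromCols,
      toBlocks_fromBlocks₁₂]
  · rw [trace_mul_cycle, conjTranspose_fromRows_eq_fromCols_conjTranspose, fromCols_mul_fromRows,
      Matrix.add_mul, trace_add]

lemma exists_svd_of_conjTranspose_mul_mul_eq_diagonal [DecidableEq κ] {X : Matrix ι κ ℝ}
    {V : Matrix κ κ ℝ} {σ : κ → ℝ} (hspec : Vᴴ * (Xᴴ * X) * V = diagonal (σ ^ 2)) :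
    ∃ U : Matrix ι κ ℝ, U * Uᴴ * U = U ∧ Uᴴ * X * V = diagonal σ ∧
      X * V = U * diagonal σ := by
  set W := X * V
  have hW : Wᴴ * W = diagonal (σ ^ 2) := by
    rw [← hspec, conjTranspose_mul]; simp only [W, Matrix.mul_assoc]
  have hdiag : ∀ d : κ → ℝ, (diagonal d)ᴴ = diagonal d := by simp
  -- `σ⁻¹` inverts the nonzero `σ i` and vanishes where `σ i = 0`, since `0⁻¹ = 0`.
  refine ⟨W * diagonal σ⁻¹, ?_, ?_, ?_⟩
  · rw [conjTranspose_mul, hdiag]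
    calc W * diagonal σ⁻¹ * (diagonal σ⁻¹ * Wᴴ) * (W * diagonal σ⁻¹)
        = W * (diagonal σ⁻¹ * diagonal σ⁻¹ * (Wᴴ * W) * diagonal σ⁻¹) := by
          simp only [Matrix.mul_assoc]
      _ = W * diagonal σ⁻¹ := by
          rw [hW, diagonal_mul_diagonal, diagonal_mul_diagonal, diagonal_mul_diagonal]
          congr 2; funext i
          simp only [Pi.inv_apply, Pi.pow_apply]
          rcases eq_or_ne (σ i) 0 with h | h <;> field_simp [h]
  · rw [conjTranspose_mul, hdiag, Matrix.mul_assoc, Matrix.mul_assoc]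
    change diagonal σ⁻¹ * (Wᴴ * W) = _
    rw [hW, diagonal_mul_diagonal]
    congr 1; funext i
    simp only [Pi.inv_apply, Pi.pow_apply]
    rcases eq_or_ne (σ i) 0 with h | h <;> field_simp [h]
  · have hker : (W * diagonal (1 - σ⁻¹ * σ))ᴴ * (W * diagonal (1 - σ⁻¹ * σ)) = 0 := by
      rw [conjTranspose_mul, hdiag, Matrix.mul_assoc, ← Matrix.mul_assoc Wᴴ, hW,
        diagonal_mul_diagonal, diagonal_mul_diagonal, ← diagonal_zero]
      congr 1; funext i
      rcases eq_or_ne (σ i) 0 with h | h <;> simp [h]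
    rw [conjTranspose_mul_self_eq_zero, Pi.sub_def, ← diagonal_sub, diagonal_one', Matrix.mul_sub,
      Matrix.mul_one, sub_eq_zero] at hker
    rw [Matrix.mul_assoc, diagonal_mul_diagonal]
    exact hker

lemma IsHermitian.conjTranspose_eigenvectorUnitary_mul_mul {A : Matrix κ κ ℝ} [DecidableEq κ]
    (hA : A.IsHermitian) :
    (hA.eigenvectorUnitary : Matrix κ κ ℝ)ᴴ * A * hA.eigenvectorUnitary =
      diagonal hA.eigenvalues := by
  simpa only [Unitary.conjStarAlgAut_star_apply, RCLike.ofReal_real_eq_id, Function.id_comp,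
    star_eq_conjTranspose]
    using hA.conjStarAlgAut_star_eigenvectorUnitary

end Matrix

theorem stmt_3 {n m : ℕ} (X : Matrix (Fin n) (Fin m) ℝ) :
    IsLeast {c : ℝ | ∃ Z : Matrix (Fin n ⊕ Fin m) (Fin n ⊕ Fin m) ℝ,
        Z.PosSemidef ∧ Z.toBlocks₁₂ = X ∧ c = (1/2) * Z.trace}
      (nuclearNorm X) := by
  have hX := isHermitian_conjTranspose_mul_self X
  set V : Matrix (Fin m) (Fin m) ℝ := ↑hX.eigenvectorUnitary
  have hVV : Vᴴ * V = 1 := mem_unitaryGroup_iff'.mp hX.eigenvectorUnitary.2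
  have hVV' : V * Vᴴ = 1 := mem_unitaryGroup_iff.mp hX.eigenvectorUnitary.2
  set σ : Fin m → ℝ := fun i => √(hX.eigenvalues i)
  have hσ : 0 ≤ σ := fun i => Real.sqrt_nonneg _
  have hspec : Vᴴ * (Xᴴ * X) * V = diagonal (σ ^ 2) := by
    rw [hX.conjTranspose_eigenvectorUnitary_mul_mul]
    congr 1; funext i
    exact (Real.sq_sqrt ((posSemidef_conjTranspose_mul_self X).eigenvalues_nonneg i)).symm
  obtain ⟨U, hU, hUXV, hXV⟩ := exists_svd_of_conjTranspose_mul_mul_eq_diagonal hspec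
  have hnuc : nuclearNorm X = ∑ i, σ i := rfl
  refine ⟨?_, ?_⟩
  · obtain ⟨Z, hZ, hZX, hZtr⟩ := exists_posSemidef_toBlocks₁₂_eq U V hσ
    refine ⟨Z, hZ, by rw [hZX, ← hXV, Matrix.mul_assoc, hVV', Matrix.mul_one], ?_⟩
    rw [hZtr, Matrix.mul_assoc, ← hXV, ← Matrix.mul_assoc, hUXV, hVV, Matrix.one_mul,
      trace_diagonal, hnuc]
    ring
  · rintro _ ⟨Z, hZ, rfl, rfl⟩
    have := hZ.two_mul_sum_le_trace hU (by rw [hVV', Matrix.one_mul]) hUXV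
    linarith
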